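/- If a formula has finite Kreisel–Putnam rank, then so does the result of applying any substitution whose values all have finite Kreisel–Putnam rank (i.e., finiteness of rank is preserved under composition of substitutions with finite-rank values). -/

import Mathlib

inductive Fml : Type where
  | atom : ℕ → Fml
  | bot  : Fml
  | and  : Fml → Fml → Fml
  | or   : Fml → Fml → Fml
  | imp  : Fml → Fml → Fml
deriving DecidableEq

/-- Intuitionistic negation: ¬φ := φ → ⊥. -/
def Fml.neg (φ : Fml) : Fml := .imp φ .bot

/-- Biconditional. -/
def Fml.iff (φ ψ : Fml) : Fml := .and (.imp φ ψ) (.imp ψ φ)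

/-- Disjunction of a list of formulas (empty disjunction is ⊥). -/
def disj : List Fml → Fml
  | [] => .bot
  | [φ] => φ
  | φ :: l => .or φ (disj l)

/-- Conjunction of a list of formulas (empty conjunction is ¬⊥). -/
def conj : List Fml → Fml
  | [] => Fml.neg .bot
  | [φ] => φ
  | φ :: l => .and φ (conj l)

/-- Substitution, extended homomorphically. -/
def Fml.subst (σ : ℕ → Fml) : Fml → Fml
  | .atom p => σ p
  | .bot => .bot
  | .and φ ψ => .and (φ.subst σ) (ψ.subst σ)
  | .or φ ψ => .or (φ.subst σ) (ψ.subst σ)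
  | .imp φ ψ => .imp (φ.subst σ) (ψ.subst σ)

/-- Hilbert-style provability for intuitionistic logic plus extra axioms `Ax`. -/
inductive Prov (Ax : Fml → Prop) : Fml → Prop where
  | ax {φ} : Ax φ → Prov Ax φ
  | k {φ ψ} : Prov Ax (.imp φ (.imp ψ φ))
  | s {φ ψ χ} : Prov Ax (.imp (.imp φ (.imp ψ χ)) (.imp (.imp φ ψ) (.imp φ χ)))
  | andI {φ ψ} : Prov Ax (.imp φ (.imp ψ (.and φ ψ)))
  | andE₁ {φ ψ} : Prov Ax (.imp (.and φ ψ) φ)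
  | andE₂ {φ ψ} : Prov Ax (.imp (.and φ ψ) ψ)
  | orI₁ {φ ψ} : Prov Ax (.imp φ (.or φ ψ))
  | orI₂ {φ ψ} : Prov Ax (.imp ψ (.or φ ψ))
  | orE {φ ψ χ} : Prov Ax (.imp (.imp φ χ) (.imp (.imp ψ χ) (.imp (.or φ ψ) χ)))
  | exfalso {φ} : Prov Ax (.imp .bot φ)
  | mp {φ ψ} : Prov Ax (.imp φ ψ) → Prov Ax φ → Prov Ax ψ

/-- No extra axioms: pure intuitionistic logic is `Prov NoAx`. -/
def NoAx : Fml → Prop := fun _ => False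

/-- Instances of the weak Kreisel–Putnam axiom schema. -/
def wKPAx : Fml → Prop := fun φ =>
  ∃ a b c : Fml, φ = .imp (.imp a.neg (.or b.neg c.neg))
    (.or (.imp a.neg b.neg) (.imp a.neg c.neg))

/-- Intuitionistic Kripke forcing over a preordered set of worlds. -/
def Force {W : Type} [Preorder W] (V : W → ℕ → Prop) : W → Fml → Prop
  | w, .atom p => V w p
  | _, .bot => False
  | w, .and φ ψ => Force V w φ ∧ Force V w ψ
  | w, .or φ ψ => Force V w φ ∨ Force V w ψ
  | w, .imp φ ψ => ∀ v, w ≤ v → Force V v φ → Force V v ψ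

/-- A valuation is monotone (persistent). -/
def MonoVal {W : Type} [Preorder W] (V : W → ℕ → Prop) : Prop :=
  ∀ ⦃w w'⦄, w ≤ w' → ∀ p, V w p → V w' p

/-- The Medvedev frame `M n`: nonempty subsets of `Fin n` ordered by reverse inclusion. -/
def Med (n : ℕ) : Type := {I : Finset (Fin n) // I.Nonempty}

instance {n : ℕ} : PartialOrder (Med n) where
  le I J := J.1 ⊆ I.1
  le_refl I := Finset.Subset.refl _
  le_trans I J K h h' := Finset.Subset.trans h' h
  le_antisymm I J h h' := Subtype.ext (Finset.Subset.antisymm h' h)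

instance {n : ℕ} : DecidableEq (Med n) := Subtype.instDecidableEq

/-- Validity on the Medvedev frame `M n`. -/
def MedValid (n : ℕ) (φ : Fml) : Prop :=
  ∀ V : Med n → ℕ → Prop, MonoVal V → ∀ w, Force V w φ

/-- Medvedev's logic of finite problems. -/
def ML (φ : Fml) : Prop := ∀ n, MedValid n φ

/-- The singleton world `{i}` of `M n`. -/
def single {n : ℕ} (i : Fin n) : Med n := ⟨{i}, Finset.singleton_nonempty i⟩

/-- Exponentiation on ℕ∞ (anything involving ∞ gives ∞). -/
def epow : ℕ∞ → ℕ∞ → ℕ∞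
  | some a, some b => some (a ^ b)
  | _, _ => ⊤

/-- Kreisel–Putnam rank. -/
def rank : Fml → ℕ∞
  | .imp _ .bot => 1
  | .or φ ψ => rank φ + rank ψ
  | .and φ ψ => rank φ * rank ψ
  | .imp φ ψ => epow (rank ψ) (rank φ)
  | _ => ⊤

/-- Disjunction of `α i` over a finite index set. -/
noncomputable def bigOrOn {n : ℕ} (α : Fin n → Fml) (I : Finset (Fin n)) : Fml :=
  disj (I.toList.map α)

/-- `α_I := ¬¬⋁_{i ∈ I} α_i`. -/
noncomputable def alphaF {n : ℕ} (α : Fin n → Fml) (I : Finset (Fin n)) : Fml :=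
  Fml.neg (Fml.neg (bigOrOn α I))

/-! Induction on the formula. Since no rank is `0`, the rank of a conjunction, disjunction or
implication is finite exactly when both components have finite rank, so finiteness passes through
each connective. The only subtlety is the clause `rank (φ → ⊥) = 1`: substitution cannot turn
an implication with a consequent of finite rank into a negation, because such a consequent
is neither `⊥` nor an atom. -/

theorem epow_coe_coe (a b : ℕ) : epow a b = ((a ^ b : ℕ) : ℕ∞) := rfl

theorem epow_top_left (b : ℕ∞) : epow ⊤ b = ⊤ := rfl

theorem epow_top_right (a : ℕ∞) : epow a ⊤ = ⊤ := by cases a <;> rfl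

theorem epow_ne_top_iff {a b : ℕ∞} : epow a b ≠ ⊤ ↔ a ≠ ⊤ ∧ b ≠ ⊤ := by
  induction a using ENat.recTopCoe <;> induction b using ENat.recTopCoe <;>
    simp [epow_coe_coe, epow_top_left, epow_top_right]

theorem epow_ne_zero {a : ℕ∞} (ha : a ≠ 0) (b : ℕ∞) : epow a b ≠ 0 := by
  induction a using ENat.recTopCoe <;> induction b using ENat.recTopCoe <;>
    simp_all [epow_coe_coe, epow_top_left, epow_top_right]

theorem rank_imp {φ ψ : Fml} (hψ : ψ ≠ .bot) : rank (.imp φ ψ) = epow (rank ψ) (rank φ) := by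
  cases ψ <;> first | exact absurd rfl hψ | rfl

theorem rank_ne_zero (φ : Fml) : rank φ ≠ 0 := by
  induction φ with
  | atom | bot => simp [rank]
  | and φ ψ ihφ ihψ => exact mul_ne_zero ihφ ihψ
  | or φ _ ihφ _ => exact fun h => ihφ (add_eq_zero.mp h).1
  | imp φ ψ _ ihψ =>
    by_cases hψ : ψ = .bot
    · simp [hψ, rank]
    · rw [rank_imp hψ]
      exact epow_ne_zero ihψ _

theorem rank_and_ne_top_iff {φ ψ : Fml} :
    rank (.and φ ψ) ≠ ⊤ ↔ rank φ ≠ ⊤ ∧ rank ψ ≠ ⊤ := by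
  refine ⟨fun h => ⟨fun hφ => h ?_, fun hψ => h ?_⟩, fun h => WithTop.mul_ne_top h.1 h.2⟩
  · rw [rank, hφ, ENat.top_mul (rank_ne_zero ψ)]
  · rw [rank, hψ, ENat.mul_top (rank_ne_zero φ)]

theorem rank_or_ne_top_iff {φ ψ : Fml} :
    rank (.or φ ψ) ≠ ⊤ ↔ rank φ ≠ ⊤ ∧ rank ψ ≠ ⊤ :=
  WithTop.add_ne_top

theorem rank_imp_ne_top_iff {φ ψ : Fml} (hψ : ψ ≠ .bot) :
    rank (.imp φ ψ) ≠ ⊤ ↔ rank φ ≠ ⊤ ∧ rank ψ ≠ ⊤ := by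
  rw [rank_imp hψ, epow_ne_top_iff, and_comm]

theorem subst_ne_bot {ψ : Fml} (σ : ℕ → Fml) (hψ : ψ ≠ .bot) (hrank : rank ψ ≠ ⊤) :
    ψ.subst σ ≠ .bot := by
  cases ψ <;> simp_all [Fml.subst, rank]

/-- finiteness of Kreisel–Putnam rank is preserved by substitutions all of
whose values have finite rank. -/
theorem stmt13 (φ : Fml) (σ : ℕ → Fml) (hφ : rank φ ≠ ⊤)
    (hσ : ∀ p, rank (σ p) ≠ ⊤) : rank (φ.subst σ) ≠ ⊤ := by
  induction φ with
  | atom p => exact hσ p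
  | bot => exact hφ
  | and φ ψ ihφ ihψ =>
    obtain ⟨hφ, hψ⟩ := rank_and_ne_top_iff.mp hφ
    exact rank_and_ne_top_iff.mpr ⟨ihφ hφ, ihψ hψ⟩
  | or φ ψ ihφ ihψ =>
    obtain ⟨hφ, hψ⟩ := rank_or_ne_top_iff.mp hφ
    exact rank_or_ne_top_iff.mpr ⟨ihφ hφ, ihψ hψ⟩
  | imp φ ψ ihφ ihψ =>
    by_cases hbot : ψ = .bot
    · subst hbot
      simp [Fml.subst, rank]
    obtain ⟨hφ, hψ⟩ := (rank_imp_ne_top_iff hbot).mp hφ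
    exact (rank_imp_ne_top_iff (subst_ne_bot σ hbot hψ)).mpr ⟨ihφ hφ, ihψ hψ⟩
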